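/- Fix x ∈ (0,1) and δ > 0. Let (R_ℓ)_{ℓ≥1} be a sequence of positive reals with R_ℓ → ∞ and |R_ℓ − πN| ≥ δ for every positive integer N. For R > 0 and θ ∈ [0, 2π] set z(θ) = R·e^{iθ/2} and g_R(θ) = sin(z(θ)x)·sin(z(θ)(1−x)) / (z(θ)·sin z(θ)) (this is the value on the diagonal of the Green function of the Dirichlet operator −d²/dx² on [0,1] at the spectral parameter λ = R²e^{iθ}; it depends only on λ since the expression is an even function of z). Then the contour integral of the squared Green function over the circle |λ| = R_ℓ² converges: ∫₀^{2π} g_{R_ℓ}(θ)² · i·R_ℓ²·e^{iθ} dθ → −πi/2 as ℓ → ∞. -/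

import Mathlib

open Complex Filter

/-- The diagonal value of the Dirichlet Green function on the circle
`|λ| = R²`, parametrized by `λ = R² e^{iθ}`, i.e. `z = R e^{iθ/2}`:
`g_R(θ) = sin(zx) sin(z(1−x)) / (z sin z)`. -/
noncomputable def dirichletGreenDiag (x : ℝ) (R θ : ℝ) : ℂ :=
  sin ((R : ℂ) * exp (I * θ / 2) * x) * sin ((R : ℂ) * exp (I * θ / 2) * (1 - x))
    / ((R : ℂ) * exp (I * θ / 2) * sin ((R : ℂ) * exp (I * θ / 2)))

noncomputable def auxFz (x : ℝ) (z : ℂ) : ℂ :=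
  I * (Complex.sin (z * x) * Complex.sin (z * (1 - x))) ^ 2 / (Complex.sin z) ^ 2

lemma sin_eq' (z : ℂ) : Complex.sin z = (Complex.exp (-z * I) - Complex.exp (z * I)) * I / 2 := rfl

lemma sin_eq'' (w : ℂ) : Complex.sin w = (1 - exp (w * I) ^ 2) * I / (2 * exp (w * I)) := by
  have h0 : exp (w * I) ≠ 0 := Complex.exp_ne_zero _
  rw [sin_eq', neg_mul, Complex.exp_neg]
  field_simp


lemma identity1 (x : ℝ) (R θ : ℝ) (hR : R ≠ 0) :
    (dirichletGreenDiag x R θ) ^ 2 * (I * (R : ℂ) ^ 2 * exp (I * θ)) =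
      auxFz x ((R : ℂ) * exp (I * θ / 2)) := by
  set z : ℂ := (R : ℂ) * exp (I * θ / 2) with hz
  have hzne : z ≠ 0 := by
    apply mul_ne_zero (by exact_mod_cast hR) (Complex.exp_ne_zero _)
  have hsq : (R : ℂ) ^ 2 * exp (I * θ) = z ^ 2 := by
    rw [hz, mul_pow, sq (exp (I * ↑θ / 2)), ← Complex.exp_add]
    ring_nf
  rw [dirichletGreenDiag, auxFz, ← hz, mul_assoc I, hsq]
  by_cases hs : Complex.sin z = 0
  · simp [hs]
  · field_simp

lemma identity2 (x : ℝ) (z : ℂ) (h : exp (2 * z * I) ≠ 1) :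
    auxFz x z = -I * (1 - exp (2 * (z * x) * I)) ^ 2 * (1 - exp (2 * (z * (1 - x)) * I)) ^ 2
      / (4 * (1 - exp (2 * z * I)) ^ 2) := by
  set p : ℂ := exp (z * x * I) with hp
  set q : ℂ := exp (z * (1 - x) * I) with hq
  have hp0 : p ≠ 0 := Complex.exp_ne_zero _
  have hq0 : q ≠ 0 := Complex.exp_ne_zero _
  have hpq : exp (z * I) = p * q := by
    rw [hp, hq, ← Complex.exp_add]; congr 1; ring
  have ha : exp (2 * (z * x) * I) = p ^ 2 := by
    rw [hp, sq, ← Complex.exp_add]; congr 1; ring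
  have hb : exp (2 * (z * (1 - x)) * I) = q ^ 2 := by
    rw [hq, sq, ← Complex.exp_add]; congr 1; ring
  have hc : exp (2 * z * I) = (p * q) ^ 2 := by
    rw [← hpq, sq, ← Complex.exp_add]; congr 1; ring
  have hc1 : (1 : ℂ) - (p * q) ^ 2 ≠ 0 := by
    rw [hc] at h; exact sub_ne_zero.2 fun e => h e.symm
  rw [auxFz, sin_eq'' (z * ↑x), sin_eq'' (z * (1 - ↑x)), sin_eq'' z, ha, hb, hc, ← hp, ← hq, hpq]
  field_simp
  ring_nf
  simp only [Complex.I_sq]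
  ring

lemma sin_abs_upper (w : ℂ) (h : 0 ≤ w.im) : ‖Complex.sin w‖ ≤ Real.exp w.im := by
  rw [sin_eq', norm_div, norm_mul, Complex.norm_I, Complex.norm_two, mul_one]
  have h1 : ‖Complex.exp (-w * I) - Complex.exp (w * I)‖ ≤
      Real.exp w.im + Real.exp (-w.im) := by
    refine (norm_sub_le _ _).trans ?_
    rw [Complex.norm_exp, Complex.norm_exp]
    simp [Complex.mul_re]
  have h2 : Real.exp (-w.im) ≤ Real.exp w.im := Real.exp_le_exp.2 (by linarith)
  calc ‖Complex.exp (-w * I) - Complex.exp (w * I)‖ / 2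
      ≤ (Real.exp w.im + Real.exp (-w.im)) / 2 := by linarith
    _ ≤ Real.exp w.im := by linarith

lemma sin_abs_lower (w : ℂ) :
    (Real.exp w.im - Real.exp (-w.im)) / 2 ≤ ‖Complex.sin w‖ := by
  rw [sin_eq', norm_div, norm_mul, Complex.norm_I, Complex.norm_two, mul_one]
  have h1 : Real.exp w.im - Real.exp (-w.im) ≤
      ‖Complex.exp (-w * I) - Complex.exp (w * I)‖ := by
    have h0 := norm_sub_norm_le (Complex.exp (-w * I)) (Complex.exp (w * I))
    rw [Complex.norm_exp, Complex.norm_exp] at h0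
    simpa [Complex.mul_re] using h0
  linarith

lemma sin_re' (w : ℂ) : (Complex.sin w).re = Real.sin w.re * Real.cosh w.im := by
  rw [Complex.sin_eq]
  simp [Complex.add_re, Complex.mul_re, Complex.sin_ofReal_re, Complex.sin_ofReal_im,
    Complex.cos_ofReal_re, Complex.cos_ofReal_im, Complex.cosh_ofReal_re, Complex.cosh_ofReal_im,
    Complex.sinh_ofReal_re, Complex.sinh_ofReal_im]

lemma sin_abs_lower_re (w : ℂ) : |Real.sin w.re| ≤ ‖Complex.sin w‖ := by
  have h1 : |(Complex.sin w).re| ≤ ‖Complex.sin w‖ := Complex.abs_re_le_norm _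
  rw [sin_re', abs_mul, _root_.abs_of_pos (Real.cosh_pos _)] at h1
  nlinarith [Real.one_le_cosh w.im, abs_nonneg (Real.sin w.re)]

lemma abs_sin_eq (u : ℝ) (h : |u| ≤ Real.pi) : |Real.sin u| = Real.sin |u| := by
  rcases le_or_gt 0 u with h0 | h0
  · rw [_root_.abs_of_nonneg h0, _root_.abs_of_nonneg
      (Real.sin_nonneg_of_nonneg_of_le_pi h0 (by rwa [_root_.abs_of_nonneg h0] at h))]
  · rw [_root_.abs_of_neg h0]
    have hn : 0 ≤ Real.sin (-u) := Real.sin_nonneg_of_nonneg_of_le_pi (by linarith)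
      (by rwa [_root_.abs_of_neg h0] at h)
    rw [Real.sin_neg] at hn
    rw [_root_.abs_of_nonpos (by linarith), Real.sin_neg]

lemma real_sin_sep (s d : ℝ) (hd0 : 0 < d) (hd2 : d ≤ Real.pi / 2)
    (hs : Real.pi / 2 < s) (hsep : ∀ N : ℕ, 1 ≤ N → d ≤ |s - Real.pi * N|) :
    Real.sin d ≤ |Real.sin s| := by
  have hpi := Real.pi_pos
  set n : ℤ := round (s / Real.pi) with hn
  have hr : |s / Real.pi - n| ≤ 1 / 2 := abs_sub_round _
  have hn1 : 1 ≤ n := by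
    have h1 : (1:ℝ)/2 < s / Real.pi := by
      rw [lt_div_iff₀ hpi]; linarith
    have h2 : (0:ℝ) < (n:ℝ) := by
      have := abs_le.1 hr
      linarith [this.1]
    have h3 : (0:ℤ) < n := by exact_mod_cast h2
    omega
  set u : ℝ := s - n * Real.pi with hu
  have hupi : |u| ≤ Real.pi / 2 := by
    have he : |s / Real.pi - n| * Real.pi = |u| := by
      rw [← _root_.abs_of_pos hpi, ← abs_mul, _root_.abs_of_pos hpi, hu]
      congr 1
      field_simp
    rw [← he]
    calc |s / Real.pi - n| * Real.pi ≤ (1/2) * Real.pi :=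
          mul_le_mul_of_nonneg_right hr hpi.le
      _ = Real.pi / 2 := by ring
  have hud : d ≤ |u| := by
    have h3 := hsep n.toNat (by omega)
    rw [hu]
    have hcast : ((n.toNat : ℕ) : ℝ) = (n : ℝ) := by exact_mod_cast Int.toNat_of_nonneg (by omega)
    rw [hcast, mul_comm] at h3
    exact h3
  have hsu : u + n * Real.pi = s := by rw [hu]; ring
  have hsin : Real.sin s = (-1)^n * Real.sin u := by
    rw [← hsu, Real.sin_add_int_mul_pi]
  have habs : |Real.sin s| = Real.sin |u| := by
    rw [hsin, abs_mul]
    have h4 : |((-1:ℝ))^n| = 1 := by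
      rcases Int.even_or_odd n with he | ho
      · rw [he.neg_one_zpow]; simp
      · rw [Odd.neg_one_zpow ho]; simp
    rw [h4, one_mul, abs_sin_eq u (by linarith)]
  rw [habs]
  exact Real.sin_le_sin_of_le_of_le_pi_div_two (by linarith) hupi hud

lemma z_re_im (Rl θ : ℝ) :
    ((Rl : ℂ) * exp (I * θ / 2)).re = Rl * Real.cos (θ / 2) ∧
    ((Rl : ℂ) * exp (I * θ / 2)).im = Rl * Real.sin (θ / 2) := by
  have h : I * (θ:ℂ) / 2 = ((θ/2 : ℝ) : ℂ) * I := by push_cast; ring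
  have key : (Rl : ℂ) * exp (I * θ / 2) =
      ((Rl * Real.cos (θ/2) : ℝ) : ℂ) + ((Rl * Real.sin (θ/2) : ℝ) : ℂ) * I := by
    rw [h, Complex.exp_mul_I, ← Complex.ofReal_cos, ← Complex.ofReal_sin,
      Complex.ofReal_mul, Complex.ofReal_mul]
    ring
  rw [key]
  constructor <;>
    · simp only [Complex.add_re, Complex.add_im, Complex.ofReal_re, Complex.ofReal_im,
        Complex.mul_re, Complex.mul_im, Complex.I_re, Complex.I_im]
      ring

lemma abs_auxFz_eq (x : ℝ) (z : ℂ) :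
    ‖auxFz x z‖ =
      (‖Complex.sin (z * x)‖ * ‖Complex.sin (z * (1 - x))‖) ^ 2
        / ‖Complex.sin z‖ ^ 2 := by
  rw [auxFz, norm_div, norm_mul, norm_pow, norm_pow, Complex.norm_I, one_mul, norm_mul]

lemma arith_sep (δ Rl s t : ℝ) (hδ : 0 < δ)
    (hRl4 : 4 ≤ Rl) (hRlδ : 2/δ ≤ Rl)
    (hst : s^2 + t^2 = Rl^2) (ht0 : 0 ≤ t) (ht1 : t < 1)
    (hsep : ∀ N : ℕ, 1 ≤ N → δ ≤ |Rl - Real.pi * N|) :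
    Real.sin (min (δ/2) (Real.pi/2)) ≤ |Real.sin s| := by
  have hpi := Real.pi_pos
  set d : ℝ := min (δ/2) (Real.pi/2) with hd
  have hd0 : 0 < d := lt_min (by linarith) (by linarith)
  have hdpi : d ≤ Real.pi / 2 := min_le_right _ _
  have hdδ : d ≤ δ/2 := min_le_left _ _
  have hRl0 : 0 < Rl := by linarith
  set a : ℝ := |s| with ha
  have ha0 : 0 ≤ a := abs_nonneg s
  have hasq : a^2 = s^2 := sq_abs s
  have ht2 : t^2 < 1 := by nlinarith
  have haR : a ≤ Rl := by nlinarith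
  have hRa : Rl - a ≤ 1/Rl := by
    rw [le_div_iff₀ hRl0]
    nlinarith
  have h1Rl : 1/Rl ≤ δ/2 := by
    rw [div_le_div_iff₀ hRl0 (by norm_num : (0:ℝ) < 2)]
    have h2 := (div_le_iff₀ hδ).1 hRlδ
    nlinarith
  have h15 : (15:ℝ) ≤ a^2 := by nlinarith
  have ha2 : (2:ℝ) < a := by nlinarith
  have hapi : Real.pi / 2 < a := by linarith [Real.pi_le_four]
  have hsepa : ∀ N : ℕ, 1 ≤ N → d ≤ |a - Real.pi * N| := by
    intro N hN
    have h1 := hsep N hN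
    have h2 : |Rl - Real.pi * N| ≤ |Rl - a| + |a - Real.pi * N| := abs_sub_le _ _ _
    have h3 : |Rl - a| = Rl - a := abs_of_nonneg (by linarith)
    linarith
  have h1 := real_sin_sep a d hd0 hdpi hapi hsepa
  have h2 : |Real.sin a| = |Real.sin s| := by
    rcases le_or_gt 0 s with h0 | h0
    · rw [ha, _root_.abs_of_nonneg h0]
    · rw [ha, _root_.abs_of_neg h0, Real.sin_neg, abs_neg]
  rw [h2] at h1
  exact h1

lemma aux_bound (x δ : ℝ) (hx : x ∈ Set.Ioo (0:ℝ) 1) (hδ : 0 < δ) :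
    ∀ Rl : ℝ, max 4 (2/δ) ≤ Rl → (∀ N : ℕ, 1 ≤ N → δ ≤ |Rl - Real.pi * N|) →
    ∀ θ ∈ Set.Icc (0:ℝ) (2 * Real.pi),
      ‖auxFz x ((Rl : ℂ) * exp (I * θ / 2))‖ ≤
        max 9 (Real.exp 2 / Real.sin (min (δ/2) (Real.pi/2)) ^ 2) := by
  intro Rl hRl hsep θ hθ
  obtain ⟨hx0, hx1⟩ := hx
  have hpi := Real.pi_pos
  set d : ℝ := min (δ/2) (Real.pi/2) with hd
  have hd0 : 0 < d := lt_min (by linarith) (by linarith)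
  have hdpi : d ≤ Real.pi / 2 := min_le_right _ _
  have hdδ : d ≤ δ/2 := min_le_left _ _
  have hsind : 0 < Real.sin d := Real.sin_pos_of_pos_of_lt_pi hd0 (by linarith)
  have hRl4 : (4:ℝ) ≤ Rl := le_trans (le_max_left _ _) hRl
  have hRlδ : 2/δ ≤ Rl := le_trans (le_max_right _ _) hRl
  have hRl0 : 0 < Rl := by linarith
  set z : ℂ := (Rl : ℂ) * exp (I * θ / 2) with hz
  obtain ⟨hre, him⟩ := z_re_im Rl θ
  rw [← hz] at hre him
  set s : ℝ := Rl * Real.cos (θ/2) with hs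
  set t : ℝ := Rl * Real.sin (θ/2) with ht
  have ht0 : 0 ≤ t := mul_nonneg hRl0.le
    (Real.sin_nonneg_of_nonneg_of_le_pi (by linarith [hθ.1]) (by linarith [hθ.2]))
  clear_value z s t
  clear hz
  have hzx_im : (z * (x:ℂ)).im = x * t := by
    simp only [Complex.mul_im, Complex.ofReal_re, Complex.ofReal_im, him, hre]
    ring
  have hzy_im : (z * (1 - (x:ℂ))).im = (1 - x) * t := by
    have h1 : ((1:ℂ) - (x:ℂ)) = (((1 - x : ℝ)) : ℂ) := by push_cast; ring
    rw [h1]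
    simp only [Complex.mul_im, Complex.ofReal_re, Complex.ofReal_im, him, hre]
    ring
  have hnum : ‖Complex.sin (z * x)‖ * ‖Complex.sin (z * (1 - x))‖
      ≤ Real.exp t := by
    have h1 := sin_abs_upper (z * (x:ℂ)) (by rw [hzx_im]; positivity)
    have h2 := sin_abs_upper (z * (1 - (x:ℂ))) (by rw [hzy_im]; nlinarith)
    rw [hzx_im] at h1
    rw [hzy_im] at h2
    calc ‖Complex.sin (z * x)‖ * ‖Complex.sin (z * (1 - x))‖
        ≤ Real.exp (x * t) * Real.exp ((1-x) * t) :=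
          mul_le_mul h1 h2 (norm_nonneg _) (Real.exp_nonneg _)
      _ = Real.exp t := by rw [← Real.exp_add]; ring_nf
  rw [abs_auxFz_eq]
  rcases le_or_gt 1 t with hcase | hcase
  · -- t ≥ 1
    have e2 : (3:ℝ) ≤ Real.exp 2 := by nlinarith [Real.add_one_le_exp (2:ℝ)]
    have h2 : Real.exp (-t) ≤ Real.exp t / 3 := by
      rw [le_div_iff₀ (by norm_num : (0:ℝ) < 3)]
      have h3 : Real.exp (-t) * 3 ≤ Real.exp (-t) * Real.exp 2 := by
        nlinarith [Real.exp_pos (-t)]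
      have h4 : Real.exp (-t) * Real.exp 2 = Real.exp (2 - t) := by
        rw [← Real.exp_add]; ring_nf
      have h5 : Real.exp (2 - t) ≤ Real.exp t := Real.exp_le_exp.2 (by linarith)
      linarith
    have hden : Real.exp t / 3 ≤ ‖Complex.sin z‖ := by
      have h1 := sin_abs_lower z
      rw [him] at h1
      linarith
    have hdenpos : 0 < Real.exp t / 3 := by positivity
    refine le_trans ?_ (le_max_left _ _)
    calc (‖Complex.sin (z * x)‖ * ‖Complex.sin (z * (1 - x))‖) ^ 2
          / ‖Complex.sin z‖ ^ 2
        ≤ Real.exp t ^ 2 / (Real.exp t / 3) ^ 2 :=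
          div_le_div₀ (by positivity)
            (pow_le_pow_left₀ (by positivity) hnum 2) (by positivity)
            (pow_le_pow_left₀ hdenpos.le hden 2)
      _ = 9 := by
          rw [div_pow, div_div_eq_mul_div, div_eq_iff (by positivity)]
          ring
  · -- t < 1
    have hst : s^2 + t^2 = Rl^2 := by
      rw [hs, ht]
      have := Real.sin_sq_add_cos_sq (θ/2)
      nlinarith
    have hsins : Real.sin d ≤ |Real.sin s| := by
      rw [hd]
      exact arith_sep δ Rl s t hδ hRl4 hRlδ hst ht0 hcase hsep
    have hden : Real.sin d ≤ ‖Complex.sin z‖ := by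
      have h1 := sin_abs_lower_re z
      rw [hre] at h1
      linarith
    have hexpt : Real.exp t ^ 2 ≤ Real.exp 2 := by
      rw [sq, ← Real.exp_add]
      exact Real.exp_le_exp.2 (by linarith)
    refine le_trans ?_ (le_max_right _ _)
    have hcalc : (‖Complex.sin (z * x)‖ * ‖Complex.sin (z * (1 - x))‖) ^ 2
          / ‖Complex.sin z‖ ^ 2
        ≤ Real.exp t ^ 2 / Real.sin d ^ 2 :=
      div_le_div₀ (by positivity)
        (pow_le_pow_left₀ (by positivity) hnum 2) (by positivity)
        (pow_le_pow_left₀ hsind.le hden 2)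
    have hcalc2 : Real.exp t ^ 2 / Real.sin d ^ 2 ≤ Real.exp 2 / Real.sin d ^ 2 := by gcongr
    rw [hd] at hcalc hcalc2 ⊢
    linarith

lemma exp_tendsto_zero (c : ℝ) (hc : 0 < c) (f : ℕ → ℝ) (hf : Tendsto f atTop atTop)
    (w : ℕ → ℂ) (hw : ∀ ℓ, (w ℓ).re = -(c * f ℓ)) :
    Tendsto (fun ℓ => Complex.exp (w ℓ)) atTop (nhds 0) := by
  rw [tendsto_zero_iff_norm_tendsto_zero]
  have h1 : (fun ℓ => ‖Complex.exp (w ℓ)‖) = fun ℓ => Real.exp (-(c * f ℓ)) := by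
    funext ℓ
    rw [Complex.norm_exp, hw]
  rw [h1]
  exact Real.tendsto_exp_atBot.comp (tendsto_neg_atTop_atBot.comp (hf.const_mul_atTop hc))

lemma aux_tendsto (x : ℝ) (hx : x ∈ Set.Ioo (0:ℝ) 1) (θ : ℝ)
    (hθ : θ ∈ Set.Ioo (0:ℝ) (2 * Real.pi)) (R : ℕ → ℝ) (hRpos : ∀ ℓ, 0 < R ℓ)
    (hRinf : Tendsto R atTop atTop) :
    Tendsto (fun ℓ => auxFz x ((R ℓ : ℂ) * exp (I * θ / 2))) atTop (nhds (-I/4)) := by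
  obtain ⟨hx0, hx1⟩ := hx
  obtain ⟨hθ0, hθ2⟩ := hθ
  have hpi := Real.pi_pos
  have hsθ : 0 < Real.sin (θ/2) :=
    Real.sin_pos_of_pos_of_lt_pi (by linarith) (by linarith)
  set z : ℕ → ℂ := fun ℓ => (R ℓ : ℂ) * exp (I * θ / 2) with hzdef
  have him : ∀ ℓ, (z ℓ).im = R ℓ * Real.sin (θ/2) := fun ℓ => (z_re_im (R ℓ) θ).2
  have htinf : Tendsto (fun ℓ => R ℓ * Real.sin (θ/2)) atTop atTop :=
    hRinf.atTop_mul_const hsθ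
  have hA : Tendsto (fun ℓ => exp (2 * (z ℓ * (x:ℂ)) * I)) atTop (nhds 0) := by
    apply exp_tendsto_zero (2*x) (by linarith) _ htinf
    intro ℓ
    simp only [Complex.mul_re, Complex.mul_im, Complex.I_re, Complex.I_im,
      Complex.ofReal_re, Complex.ofReal_im, Complex.re_ofNat, Complex.im_ofNat, him ℓ]
    ring
  have hB : Tendsto (fun ℓ => exp (2 * (z ℓ * (1 - (x:ℂ))) * I)) atTop (nhds 0) := by
    apply exp_tendsto_zero (2*(1-x)) (by linarith) _ htinf
    intro ℓ
    have h1 : ((1:ℂ) - (x:ℂ)) = (((1 - x : ℝ)) : ℂ) := by push_cast; ring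
    rw [h1]
    simp only [Complex.mul_re, Complex.mul_im, Complex.I_re, Complex.I_im,
      Complex.ofReal_re, Complex.ofReal_im, Complex.re_ofNat, Complex.im_ofNat, him ℓ]
    ring
  have hC : Tendsto (fun ℓ => exp (2 * z ℓ * I)) atTop (nhds 0) := by
    apply exp_tendsto_zero 2 (by norm_num) _ htinf
    intro ℓ
    simp only [Complex.mul_re, Complex.mul_im, Complex.I_re, Complex.I_im,
      Complex.re_ofNat, Complex.im_ofNat, him ℓ]
    ring
  have hCne : ∀ ℓ, exp (2 * z ℓ * I) ≠ 1 := by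
    intro ℓ he
    have h1 : ‖exp (2 * z ℓ * I)‖ = Real.exp (-(2 * (R ℓ * Real.sin (θ/2)))) := by
      rw [Complex.norm_exp]
      congr 1
      simp only [Complex.mul_re, Complex.mul_im, Complex.I_re, Complex.I_im,
        Complex.re_ofNat, Complex.im_ofNat, him ℓ]
      ring
    rw [he] at h1
    simp only [norm_one] at h1
    have h2 : -(2 * (R ℓ * Real.sin (θ/2))) < 0 := by
      have := hRpos ℓ
      nlinarith
    have h3 : Real.exp (-(2 * (R ℓ * Real.sin (θ/2)))) < 1 := Real.exp_lt_one_iff.2 h2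
    rw [← h1] at h3
    norm_num at h3
  have hlim : Tendsto (fun ℓ => -I * (1 - exp (2 * (z ℓ * (x:ℂ)) * I)) ^ 2
      * (1 - exp (2 * (z ℓ * (1 - (x:ℂ))) * I)) ^ 2
      / (4 * (1 - exp (2 * z ℓ * I)) ^ 2)) atTop
      (nhds (-I * (1 - 0) ^ 2 * (1 - 0) ^ 2 / (4 * (1 - 0) ^ 2))) := by
    apply Tendsto.div
    · exact (tendsto_const_nhds.mul ((tendsto_const_nhds.sub hA).pow 2)).mul
        ((tendsto_const_nhds.sub hB).pow 2)
    · exact tendsto_const_nhds.mul ((tendsto_const_nhds.sub hC).pow 2)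
    · norm_num
  have heq : ∀ ℓ, auxFz x (z ℓ) = -I * (1 - exp (2 * (z ℓ * (x:ℂ)) * I)) ^ 2
      * (1 - exp (2 * (z ℓ * (1 - (x:ℂ))) * I)) ^ 2
      / (4 * (1 - exp (2 * z ℓ * I)) ^ 2) := fun ℓ => identity2 x (z ℓ) (hCne ℓ)
  have : (-I * (1 - 0) ^ 2 * (1 - 0) ^ 2 / (4 * (1 - 0) ^ 2) : ℂ) = -I/4 := by norm_num
  rw [this] at hlim
  exact hlim.congr (fun ℓ => (heq ℓ).symm)

/-- Theorem 2.5 (Dirichlet case): for `x ∈ (0,1)` and radii `R_ℓ → ∞` separated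
from the square roots `πN` of the eigenvalues, the contour integral of the
squared Green function over `|λ| = R_ℓ²` converges to `−πi/2`. -/
theorem green_squared_contour_integral (x : ℝ) (hx : x ∈ Set.Ioo (0:ℝ) 1)
    (δ : ℝ) (hδ : 0 < δ) (R : ℕ → ℝ) (hRpos : ∀ ℓ, 0 < R ℓ)
    (hRinf : Tendsto R atTop atTop)
    (hsep : ∀ ℓ : ℕ, ∀ N : ℕ, 1 ≤ N → δ ≤ |R ℓ - Real.pi * N|) :
    Tendsto
      (fun ℓ : ℕ => ∫ θ in (0:ℝ)..(2 * Real.pi),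
        (dirichletGreenDiag x (R ℓ) θ) ^ 2 * (I * (R ℓ : ℂ) ^ 2 * exp (I * θ)))
      atTop (nhds (-((Real.pi : ℂ) * I) / 2)) := by
  have hpi := Real.pi_pos
  have huIoc : Set.uIoc (0:ℝ) (2 * Real.pi) = Set.Ioc 0 (2 * Real.pi) :=
    Set.uIoc_of_le (by linarith)
  have hEq : ∀ ℓ, (∫ θ in (0:ℝ)..(2 * Real.pi),
        (dirichletGreenDiag x (R ℓ) θ) ^ 2 * (I * (R ℓ : ℂ) ^ 2 * exp (I * θ)))
      = ∫ θ in (0:ℝ)..(2 * Real.pi), auxFz x ((R ℓ : ℂ) * exp (I * θ / 2)) := by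
    intro ℓ
    apply intervalIntegral.integral_congr
    intro θ _
    exact identity1 x (R ℓ) θ (hRpos ℓ).ne'
  have hmeas : ∀ᶠ ℓ in atTop, MeasureTheory.AEStronglyMeasurable
      (fun θ : ℝ => auxFz x ((R ℓ : ℂ) * exp (I * θ / 2)))
      (MeasureTheory.volume.restrict (Set.uIoc (0:ℝ) (2 * Real.pi))) := by
    apply Filter.Eventually.of_forall
    intro ℓ
    have hz : Continuous fun θ : ℝ => (R ℓ : ℂ) * exp (I * (θ:ℂ) / 2) := by
      apply continuous_const.mul
      exact Complex.continuous_exp.comp ((continuous_const.mul Complex.continuous_ofReal).div_const 2)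
    have hnum : Continuous fun θ : ℝ => I * (Complex.sin ((R ℓ : ℂ) * exp (I * (θ:ℂ) / 2) * x)
        * Complex.sin ((R ℓ : ℂ) * exp (I * (θ:ℂ) / 2) * (1 - x))) ^ 2 :=
      continuous_const.mul (((Complex.continuous_sin.comp (hz.mul continuous_const)).mul
        (Complex.continuous_sin.comp (hz.mul continuous_const))).pow 2)
    have hden : Continuous fun θ : ℝ => (Complex.sin ((R ℓ : ℂ) * exp (I * (θ:ℂ) / 2))) ^ 2 :=
      (Complex.continuous_sin.comp hz).pow 2
    exact (hnum.measurable.div hden.measurable).aestronglyMeasurable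
  have hbound : ∀ᶠ ℓ in atTop, ∀ᵐ θ : ℝ, θ ∈ Set.uIoc (0:ℝ) (2 * Real.pi) →
      ‖auxFz x ((R ℓ : ℂ) * exp (I * θ / 2))‖ ≤
        max 9 (Real.exp 2 / Real.sin (min (δ/2) (Real.pi/2)) ^ 2) := by
    filter_upwards [hRinf.eventually_ge_atTop (max 4 (2/δ))] with ℓ hℓ
    apply MeasureTheory.ae_of_all
    intro θ hθ
    rw [huIoc] at hθ
    exact aux_bound x δ hx hδ (R ℓ) hℓ (hsep ℓ) θ ⟨hθ.1.le, hθ.2⟩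
  have hne : ∀ᵐ θ : ℝ, θ ≠ 2 * Real.pi := by
    refine MeasureTheory.ae_iff.2 ?_
    have : {a : ℝ | ¬ a ≠ 2 * Real.pi} = {2 * Real.pi} := by ext a; simp
    rw [this]
    exact MeasureTheory.measure_singleton _
  have hlim : ∀ᵐ θ : ℝ, θ ∈ Set.uIoc (0:ℝ) (2 * Real.pi) →
      Tendsto (fun ℓ => auxFz x ((R ℓ : ℂ) * exp (I * θ / 2))) atTop (nhds (-I/4)) := by
    filter_upwards [hne] with θ hθne hθ
    rw [huIoc] at hθ
    exact aux_tendsto x hx θ ⟨hθ.1, lt_of_le_of_ne hθ.2 hθne⟩ R hRpos hRinf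
  have hDCT := intervalIntegral.tendsto_integral_filter_of_dominated_convergence
    (F := fun ℓ (θ : ℝ) => auxFz x ((R ℓ : ℂ) * exp (I * θ / 2)))
    (f := fun _ : ℝ => (-I/4 : ℂ))
    (bound := fun _ : ℝ => max 9 (Real.exp 2 / Real.sin (min (δ/2) (Real.pi/2)) ^ 2))
    hmeas hbound intervalIntegrable_const hlim
  have hval : (∫ _ in (0:ℝ)..(2 * Real.pi), (-I/4 : ℂ)) = -((Real.pi : ℂ) * I) / 2 := by
    rw [intervalIntegral.integral_const, sub_zero, Complex.real_smul]
    push_cast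
    ring
  rw [hval] at hDCT
  exact hDCT.congr fun ℓ => (hEq ℓ).symm
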